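/- arXiv:1912.08872 — 2 statements merged into one kernel-verified Lean document; each statement's English description precedes it below -/
import Mathlib

section
/- Let G be a finite group acting on a countably infinite universal G-set U, and let C and D be M(U)-categories, each carrying the G-action through the functors (l^g)_*. Then the functor F^G(C ⊠ D) → F^G(C) × F^G(D), induced on G-fixed categories by the two projections of the box product, is an equivalence of categories: it is fully faithful, and every pair of G-fixed objects (c, d) is isomorphic in the G-fixed category of C × D to a disjointly supported G-fixed pair. (This is the G-fixed-point form of the theorem that the inclusion C ⊠ D → C × D is a global equivalence.) -/
open CategoryTheory

/-- The monoid of injective self-maps of `U`, under composition. -/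
def Minj (U : Type*) : Submonoid (Function.End U) where
  carrier := {f | Function.Injective f}
  mul_mem' := fun hf hg => hf.comp hg
  one_mem' := Function.injective_id

instance (U : Type*) : FunLike (Minj U) U U where
  coe u := u.1
  coe_injective := fun _ _ h => Subtype.ext h

@[simp] lemma Minj.mul_apply {U : Type*} (u v : Minj U) (a : U) : (u * v) a = u (v a) := rfl

/-- `x` is supported on `A` if every injection fixing `A` elementwise fixes `x`. -/
def Supported {U : Type*} {X : Type*} [MulAction (Minj U) X] (A : Set U) (x : X) : Prop :=
  ∀ u : Minj U, (∀ a ∈ A, u a = a) → u • x = x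

/-- `x` is finitely supported if it is supported on some finite subset of `U`. -/
def FinSupported {U : Type*} {X : Type*} [MulAction (Minj U) X] (x : X) : Prop :=
  ∃ A : Finset U, Supported (A : Set U) x

/-- The support of `x`: the intersection of all finite subsets of `U` on which `x`
is supported. -/
def supp {U : Type*} {X : Type*} [MulAction (Minj U) X] (x : X) : Set U :=
  {i : U | ∀ A : Finset U, Supported (A : Set U) x → i ∈ A}

/-- An `M(U)`-category: a category with an action of the injection monoid on objects,
together with coherent isomorphisms `ι u x : x ≅ u • x`. The action of `u` on morphisms
is then given by conjugation with these isomorphisms. -/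
structure MCat (U : Type*) (C : Type*) [Category C] [MulAction (Minj U) C] where
  ι : ∀ (u : Minj U) (x : C), x ≅ u • x
  ι_mul : ∀ (u v : Minj U) (x : C),
    (ι u x).hom ≫ (ι v (u • x)).hom = (ι (v * u) x).hom ≫ eqToHom (mul_smul v u x)

namespace MCat

variable {U : Type*} {C : Type*} [Category C] [MulAction (Minj U) C]

/-- The action `u_*` of an injection on morphisms: `u_*(f) = ι(u,y) ∘ f ∘ ι(u,x)⁻¹`. -/
def act (h : MCat U C) (u : Minj U) {x y : C} (f : x ⟶ y) : u • x ⟶ u • y :=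
  (h.ι u x).inv ≫ f ≫ (h.ι u y).hom

/-- The natural isomorphism `[v,u]^x := ι(v,x) ∘ ι(u,x)⁻¹ : u • x ⟶ v • x`. -/
def tw (h : MCat U C) (v u : Minj U) (x : C) : u • x ⟶ v • x :=
  (h.ι u x).inv ≫ (h.ι v x).hom

@[simp] lemma act_id (h : MCat U C) (u : Minj U) (x : C) : h.act u (𝟙 x) = 𝟙 (u • x) := by
  simp [act]

@[simp] lemma act_comp (h : MCat U C) (u : Minj U) {x y z : C} (f : x ⟶ y) (g : y ⟶ z) :
    h.act u (f ≫ g) = h.act u f ≫ h.act u g := by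
  simp [act]

lemma ι_natural (h : MCat U C) (u : Minj U) {x y : C} (f : x ⟶ y) :
    (h.ι u x).hom ≫ h.act u f = f ≫ (h.ι u y).hom := by
  simp [act]

end MCat

/-- A universal `G`-set: a countable `G`-set in which every subgroup of `G` occurs as the
stabilizer of infinitely many elements. -/
def IsUniversalGSet (G : Type*) [Group G] (U : Type*) [MulAction G U] : Prop :=
  Countable U ∧ ∀ H : Subgroup G, {u : U | MulAction.stabilizer G u = H}.Infinite

/-- For `g : G`, the injection `l^g : U → U`, `i ↦ g • i`, as an element of `M(U)`. -/
def lG {G : Type*} [Group G] {U : Type*} [MulAction G U] (g : G) : Minj U :=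
  ⟨fun i => g • i, MulAction.injective g⟩

section

variable (G : Type*) [Group G] (U : Type*) [MulAction G U]
variable (C : Type*) [Category C] [MulAction (Minj U) C]

/-- Objects of the `G`-fixed category `F^G C`: objects of `C` fixed by all `(l^g)_*`. -/
structure FixedObj (hC : MCat U C) where
  obj : C
  fixed : ∀ g : G, lG (U := U) g • obj = obj

variable {G U C}

/-- The canonical automorphism of a `G`-fixed object given by `ι(l^g, x)` followed by the
identification `l^g • x = x`.  A morphism of `C` between fixed objects is `G`-fixed exactly
when it commutes with these automorphisms. -/
def fixAut (hC : MCat U C) (g : G) (x : C) (hx : lG (U := U) g • x = x) : x ⟶ x :=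
  (hC.ι (lG g) x).hom ≫ eqToHom hx

variable (G U C)

/-- The `G`-fixed category `F^G C`: `G`-fixed objects and `G`-fixed morphisms. -/
instance FixedObj.category (hC : MCat U C) : Category (FixedObj G U C hC) where
  Hom x y := {f : x.obj ⟶ y.obj //
    ∀ g : G, f ≫ fixAut hC g y.obj (y.fixed g) = fixAut hC g x.obj (x.fixed g) ≫ f}
  id x := ⟨𝟙 x.obj, fun g => by simp⟩
  comp {x y z} f g := ⟨f.1 ≫ g.1, fun γ => by
    rw [Category.assoc, g.2 γ, ← Category.assoc, f.2 γ, Category.assoc]⟩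
  id_comp f := Subtype.ext (Category.id_comp f.1)
  comp_id f := Subtype.ext (Category.comp_id f.1)
  assoc f g h := Subtype.ext (Category.assoc f.1 g.1 h.1)

end

/-- A pair of `G`-fixed objects is disjointly supported if the two components admit disjoint
supporting subsets of `U`. -/
def DisjointlySupportedPair {G U C D : Type*} [Group G] [MulAction G U]
    [Category C] [MulAction (Minj U) C] [Category D] [MulAction (Minj U) D]
    (hC : MCat U C) (hD : MCat U D)
    (p : FixedObj G U C hC × FixedObj G U D hD) : Prop :=
  ∃ A B : Set U, Disjoint A B ∧ Supported A p.1.obj ∧ Supported B p.2.obj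


/-!
A `G`-fixed pair `(c, d)` becomes disjointly supported once it is translated along two
`G`-equivariant injections `u, v : U → U` with disjoint images: `u • c` is supported on
`range u`, it is again `G`-fixed because `u` commutes with every `l^g`, and `ι(u, c)` is then a
`G`-fixed isomorphism `c ≅ u • c`. Such `u` and `v` are the two halves of an equivariant
injection `U ⊕ U → U`. It exists because, `G` being finite, a universal `G`-set has infinitely
many orbits of each orbit type, so the orbits of any countable `G`-set can be sent injectively
to orbits of the same type. Full faithfulness is automatic for a full subcategory.
-/

theorem exists_injective_comp_eq {A B T : Type*} [Countable A] (p : A → T) (q : B → T)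
    (hq : ∀ a, (q ⁻¹' {p a}).Infinite) : ∃ e : A → B, Function.Injective e ∧ q ∘ e = p := by
  obtain ⟨n, hn⟩ := exists_injective_nat A
  have hφ : ∀ t : Set.range p, ∃ φ : ℕ → B, Function.Injective φ ∧ ∀ k, q (φ k) = t := by
    rintro ⟨_, a, rfl⟩
    let φ := (hq a).natEmbedding
    exact ⟨fun k => φ k, Subtype.val_injective.comp φ.injective, fun k => (φ k).2⟩
  choose φ hφinj hφq using hφ
  refine ⟨fun a => φ ⟨p a, a, rfl⟩ (n a), fun a b hab => ?_, funext fun a => hφq _ _⟩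
  have hpab : (⟨p a, a, rfl⟩ : Set.range p) = ⟨p b, b, rfl⟩ :=
    Subtype.ext ((hφq _ _).symm.trans ((congrArg q hab).trans (hφq _ _)))
  simp only [hpab] at hab
  exact hn (hφinj _ hab)

namespace MulAction

variable {G X Y : Type*} [Group G] [MulAction G X] [MulAction G Y]

variable (G) in
/-- The conjugacy class of the stabilizer of `x`; orbits of the same type are isomorphic
`G`-sets. -/
def orbitType (x : X) : Set (Subgroup G) :=
  Set.range fun g : G => stabilizer G (g • x)

theorem stabilizer_mem_orbitType (x : X) : stabilizer G x ∈ orbitType G x :=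
  ⟨1, congrArg (stabilizer G) (one_smul G x)⟩

theorem orbitType_smul (g : G) (x : X) : orbitType G (g • x) = orbitType G x := by
  ext H
  constructor
  · rintro ⟨h, rfl⟩
    exact ⟨h * g, congrArg (stabilizer G) (mul_smul h g x)⟩
  · rintro ⟨h, rfl⟩
    exact ⟨h * g⁻¹, by simp only [mul_smul, inv_smul_smul]⟩

theorem orbitType_out (x : X) :
    orbitType G (⟦x⟧ : orbitRel.Quotient G X).out = orbitType G x := by
  obtain ⟨g, hg⟩ := Quotient.mk_out (s := orbitRel G X) x
  rw [← hg, orbitType_smul]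

theorem orbitType_eq_of_stabilizer_eq {x : X} {y : Y} (h : stabilizer G x = stabilizer G y) :
    orbitType G x = orbitType G y := by
  simp only [orbitType, stabilizer_smul_eq_stabilizer_map_conj, h]

theorem exists_stabilizer_smul_eq_of_orbitType_eq {x : X} {y : Y}
    (h : orbitType G x = orbitType G y) : ∃ g : G, stabilizer G (g • y) = stabilizer G x :=
  (h ▸ stabilizer_mem_orbitType x : stabilizer G x ∈ orbitType G y)

theorem smul_eq_smul_iff_of_stabilizer_eq {x : X} {y : Y} (h : stabilizer G x = stabilizer G y)
    (g g' : G) : g • x = g' • x ↔ g • y = g' • y := by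
  rw [← inv_smul_eq_iff, smul_smul, ← mem_stabilizer_iff, h, mem_stabilizer_iff, ← smul_smul,
    inv_smul_eq_iff]

theorem infinite_image_orbitRel_mk [Finite G] {s : Set X} (hs : s.Infinite) :
    (Quotient.mk (orbitRel G X) '' s).Infinite := by
  refine fun hfin => hs ((hfin.preimage' fun ω _ => ?_).subset (Set.subset_preimage_image _ s))
  refine (Set.finite_range fun g : G => g • ω.out).subset fun x hx => ?_
  obtain ⟨g, hg⟩ := Quotient.exact (hx.trans ω.out_eq.symm)
  exact ⟨g, hg⟩

end MulAction

section Embedding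

open MulAction

variable {G X U : Type*} [Group G] [MulAction G X] [MulAction G U]

/-- Sends `γ • ω.out` to `γ • s ω`; well defined and injective on each orbit because `s ω` and
`ω.out` have the same stabilizer. -/
theorem exists_injective_mulActionHom_of_orbit_section (s : orbitRel.Quotient G X → U)
    (hs : ∀ ω, stabilizer G (s ω) = stabilizer G ω.out)
    (hs_inj : Function.Injective fun ω => (⟦s ω⟧ : orbitRel.Quotient G U)) :
    ∃ f : X →[G] U, Function.Injective f := by
  have hγ : ∀ x : X, ∃ γ : G, γ • (⟦x⟧ : orbitRel.Quotient G X).out = x := fun x =>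
    mem_orbit_iff.mp (Quotient.exact (Quotient.out_eq (⟦x⟧ : orbitRel.Quotient G X)).symm)
  choose γ hγ using hγ
  have hmove : ∀ (x : X) (g g' : G),
      g • s ⟦x⟧ = g' • s ⟦x⟧ ↔ g • (⟦x⟧ : orbitRel.Quotient G X).out = g' • (⟦x⟧ : _).out :=
    fun x => smul_eq_smul_iff_of_stabilizer_eq (hs ⟦x⟧)
  refine ⟨⟨fun x => γ x • s ⟦x⟧, fun g x => ?_⟩, fun a b hab => ?_⟩
  · simp only [orbitRel.Quotient.quotient_smul_eq, smul_smul, id_eq]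
    rw [hmove, mul_smul, hγ]
    simpa only [orbitRel.Quotient.quotient_smul_eq] using hγ (g • x)
  · have hab' : γ a • s ⟦a⟧ = γ b • s ⟦b⟧ := hab
    have hω : (⟦a⟧ : orbitRel.Quotient G X) = ⟦b⟧ := hs_inj <| by
      simpa only [orbitRel.Quotient.quotient_smul_eq] using
        congrArg (fun u : U => (⟦u⟧ : orbitRel.Quotient G U)) hab'
    rw [hω, hmove, ← hω, hγ, hω, hγ] at hab'
    exact hab'

theorem IsUniversalGSet.exists_injective_mulActionHom [Finite G] (hU : IsUniversalGSet G U)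
    [Countable X] : ∃ f : X →[G] U, Function.Injective f := by
  have hfib : ∀ ω : orbitRel.Quotient G X,
      ((fun ω' : orbitRel.Quotient G U => orbitType G ω'.out) ⁻¹' {orbitType G ω.out}).Infinite := by
    intro ω
    refine (infinite_image_orbitRel_mk (hU.2 (stabilizer G ω.out))).mono ?_
    rintro _ ⟨u, hu, rfl⟩
    exact (orbitType_out u).trans (orbitType_eq_of_stabilizer_eq hu)
  obtain ⟨e, he_inj, he⟩ := exists_injective_comp_eq _ _ hfib
  have hs : ∀ ω, ∃ z : U, stabilizer G z = stabilizer G ω.out ∧ ⟦z⟧ = e ω := fun ω => by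
    obtain ⟨g, hg⟩ := exists_stabilizer_smul_eq_of_orbitType_eq (congrFun he ω).symm
    exact ⟨g • (e ω).out, hg, by rw [orbitRel.Quotient.quotient_smul_eq, Quotient.out_eq]⟩
  choose s hs_stab hs_orbit using hs
  refine exists_injective_mulActionHom_of_orbit_section s hs_stab ?_
  simpa only [hs_orbit] using he_inj

end Embedding

theorem supported_range_smul {U X : Type*} [MulAction (Minj U) X] (u : Minj U) (x : X) :
    Supported (Set.range u) (u • x) := fun w hw => by
  rw [← mul_smul, show w * u = u from Subtype.ext (funext fun i => hw (u i) ⟨i, rfl⟩)]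

theorem lG_mul_eq_mul_lG {G U : Type*} [Group G] [MulAction G U] {u : Minj U}
    (hu : ∀ (g : G) (i : U), u (g • i) = g • u i) (g : G) : lG g * u = u * lG g :=
  Subtype.ext (funext fun i => (hu g i).symm)

namespace MCat

variable {U C : Type*} [Category C] [MulAction (Minj U) C]

theorem eqToHom_comp_ι_hom (h : MCat U C) (u : Minj U) {a b : C} (e : a = b) :
    eqToHom e ≫ (h.ι u b).hom = (h.ι u a).hom ≫ eqToHom (congrArg (u • ·) e) := by
  subst e; simp

theorem ι_hom_comp_eqToHom_congr (h : MCat U C) {w w' : Minj U} (hw : w = w') (x : C) {z : C}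
    (e : w • x = z) (e' : w' • x = z) :
    (h.ι w x).hom ≫ eqToHom e = (h.ι w' x).hom ≫ eqToHom e' := by
  subst hw; rfl

variable {G : Type*} [Group G] [MulAction G U]

theorem ι_hom_comp_fixAut (h : MCat U C) {u : Minj U} (hu : ∀ (g : G) (i : U), u (g • i) = g • u i)
    {x : C} (hx : ∀ g : G, lG (U := U) g • x = x) (g : G) (hux : lG (U := U) g • (u • x) = u • x) :
    (h.ι u x).hom ≫ fixAut h g (u • x) hux = fixAut h g x (hx g) ≫ (h.ι u x).hom := by
  have lhs : (h.ι u x).hom ≫ (h.ι (lG g) (u • x)).hom ≫ eqToHom hux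
      = (h.ι (lG (U := U) g * u) x).hom ≫ eqToHom (by rw [mul_smul]; exact hux) := by
    rw [← Category.assoc, h.ι_mul u (lG g) x, Category.assoc, eqToHom_trans]
  have rhs : ((h.ι (lG g) x).hom ≫ eqToHom (hx g)) ≫ (h.ι u x).hom
      = (h.ι (u * lG (U := U) g) x).hom ≫ eqToHom (by rw [mul_smul, hx g]) := by
    rw [Category.assoc, h.eqToHom_comp_ι_hom u (hx g), ← Category.assoc,
      h.ι_mul (lG g) u x, Category.assoc, eqToHom_trans]
  rw [fixAut, fixAut, lhs, rhs]
  exact h.ι_hom_comp_eqToHom_congr (lG_mul_eq_mul_lG hu g) x _ _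

end MCat

namespace FixedObj

variable {G U C : Type*} [Group G] [MulAction G U] [Category C] [MulAction (Minj U) C]
  {hC : MCat U C} {u : Minj U}

def shift (hu : ∀ (g : G) (i : U), u (g • i) = g • u i) (x : FixedObj G U C hC) :
    FixedObj G U C hC :=
  ⟨u • x.obj, fun g => by rw [← mul_smul, lG_mul_eq_mul_lG hu g, mul_smul, x.fixed g]⟩

def isoMk {x y : FixedObj G U C hC} (e : x.obj ≅ y.obj)
    (he : ∀ g : G, e.hom ≫ fixAut hC g y.obj (y.fixed g) = fixAut hC g x.obj (x.fixed g) ≫ e.hom) :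
    x ≅ y where
  hom := ⟨e.hom, he⟩
  inv := ⟨e.inv, fun g => by
    rw [Iso.inv_comp_eq, ← Category.assoc, he g, Category.assoc, Iso.hom_inv_id,
      Category.comp_id]⟩
  hom_inv_id := Subtype.ext e.hom_inv_id
  inv_hom_id := Subtype.ext e.inv_hom_id

def shiftIso (hu : ∀ (g : G) (i : U), u (g • i) = g • u i) (x : FixedObj G U C hC) :
    x ≅ x.shift hu :=
  isoMk (hC.ι u x.obj) fun g => hC.ι_hom_comp_fixAut hu x.fixed g _

end FixedObj

/-- The functor `F^G(C ⊠ D) → F^G(C) × F^G(D)` induced by the projections of the box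
product — here identified with the inclusion of the full subcategory of `F^G C × F^G D`
spanned by the disjointly supported pairs — is an equivalence of categories. -/
theorem stmt0 (G : Type*) [Group G] [Finite G] (U : Type*) [MulAction G U]
    (hU : IsUniversalGSet G U)
    (C D : Type*) [Category C] [MulAction (Minj U) C] [Category D] [MulAction (Minj U) D]
    (hC : MCat U C) (hD : MCat U D) :
    (ObjectProperty.ι (DisjointlySupportedPair (G := G) hC hD)).IsEquivalence := by
  have : Countable U := hU.1
  obtain ⟨f, hf⟩ := hU.exists_injective_mulActionHom (X := U ⊕ U)
  let u : Minj U := ⟨f ∘ Sum.inl, hf.comp Sum.inl_injective⟩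
  let v : Minj U := ⟨f ∘ Sum.inr, hf.comp Sum.inr_injective⟩
  have hu : ∀ (g : G) (i : U), u (g • i) = g • u i := fun g i =>
    (congrArg f (Sum.smul_inl g i).symm).trans (map_smul f g _)
  have hv : ∀ (g : G) (i : U), v (g • i) = g • v i := fun g i =>
    (congrArg f (Sum.smul_inr g i).symm).trans (map_smul f g _)
  have huv : Disjoint (Set.range u) (Set.range v) :=
    Set.disjoint_range_iff.mpr fun i j => hf.ne Sum.inl_ne_inr
  refine { essSurj := ⟨fun p => ⟨⟨(p.1.shift hu, p.2.shift hv), _, _, huv,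
    supported_range_smul u _, supported_range_smul v _⟩,
    ⟨(Iso.prod (p.1.shiftIso hu) (p.2.shiftIso hv)).symm⟩⟩⟩ }
end

section
/- Let C be a parsummable category and φ : {1,2} × ℕ → ℕ an injection. Then the functor φ_* : C × C → C, together with the unit object 0, the associativity isomorphism α_{x,y,z}, the symmetry isomorphism τ_{x,y}, the right unit isomorphism ρ_x = [φ¹,1]^x : x → φ_*(x,0) and the left unit isomorphism [φ²,1]^x : x → φ_*(0,x), makes the underlying category of C into a symmetric monoidal category with unit object 0: the pentagon coherence axiom holds for α, the unit coherence axiom holds, the hexagon axiom relating α and τ holds, and τ_{y,x} ∘ τ_{x,y} = id for all objects x, y. -/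
/-!
Every structure morphism of `φ_*` is, up to identifying its endpoints, a twist sum
`[v,u]^x = Σᵢ [vᵢ,uᵢ]^{xᵢ} : Σᵢ uᵢ • xᵢ ⟶ Σᵢ vᵢ • xᵢ` over a list of objects `xᵢ`: this holds
for `α`, `τ` and the unitors, and it is preserved by `φ_*` (which multiplies the index
injections by `φ¹` and `φ²`), by composition (`[w,v]^x ∘ [v,u]^x = [w,u]^x`) and by reordering
the list, where strict associativity and commutativity of the sum enter. Between two given
objects a twist sum is determined by its index families `u` and `v`; both sides of each coherence
diagram are twist sums with the same index families, hence equal.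
-/

open CategoryTheory

section ExtensionLemma

/-- Any map that is injective on a finite subset of `ℕ` agrees on that subset with a
permutation of `ℕ`. -/
lemma exists_perm_extend (s : Finset ℕ) (f : ℕ → ℕ) (hf : Set.InjOn f ↑s) :
    ∃ e : Equiv.Perm ℕ, ∀ a ∈ s, e a = f a := by
  classical
  have hSfin : (↑s : Set ℕ).Finite := s.finite_toSet
  have hTfin : (f '' ↑s).Finite := hSfin.image f
  haveI : Infinite ↥(↑s : Set ℕ)ᶜ := hSfin.infinite_compl.to_subtype
  haveI : Infinite ↥(f '' ↑s)ᶜ := hTfin.infinite_compl.to_subtype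
  obtain ⟨e₂⟩ : Nonempty (↥(↑s : Set ℕ)ᶜ ≃ ↥(f '' ↑s)ᶜ) := nonempty_equiv_of_countable
  let e₁ : ↥(↑s : Set ℕ) ≃ ↥(f '' ↑s) := Equiv.Set.imageOfInjOn f ↑s hf
  refine ⟨(Equiv.Set.sumCompl (↑s : Set ℕ)).symm.trans
    ((e₁.sumCongr e₂).trans (Equiv.Set.sumCompl (f '' ↑s))), fun a ha => ?_⟩
  have ha' : a ∈ (↑s : Set ℕ) := ha
  have h3 : (Equiv.Set.sumCompl (↑s : Set ℕ)).symm a = Sum.inl ⟨a, ha'⟩ :=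
    Equiv.Set.sumCompl_symm_apply_of_mem ha'
  simp only [Equiv.trans_apply, h3, Equiv.sumCongr_apply, Sum.map_inl,
    Equiv.Set.sumCompl_apply_inl]
  rfl

variable {X : Type*} [MulAction (Minj ℕ) X]

/-- Two injections agreeing on a finite supporting set act in the same way. -/
lemma smul_eq_smul_of_eqOn {x : X} {A : Finset ℕ}
    (hA : Supported (A : Set ℕ) x) {v w : Minj ℕ} (hvw : ∀ a ∈ A, v a = w a) :
    v • x = w • x := by
  classical
  set f : ℕ → ℕ := fun b => if hb : b ∈ A.image ⇑v then (Finset.mem_image.mp hb).choose else b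
    with hfdef
  have hspec : ∀ b ∈ A.image ⇑v, f b ∈ A ∧ v (f b) = b := by
    intro b hb
    have h1 := (Finset.mem_image.mp hb).choose_spec
    simp only [hfdef, dif_pos hb]
    exact h1
  have hinj : Set.InjOn f ↑(A.image ⇑v) := by
    intro b₁ hb₁ b₂ hb₂ hb
    have h1 := hspec b₁ hb₁
    have h2 := hspec b₂ hb₂
    rw [← h1.2, ← h2.2, hb]
  obtain ⟨e, he⟩ := exists_perm_extend (A.image ⇑v) f hinj
  have heva : ∀ a ∈ A, e (v a) = a := by
    intro a ha
    have hmem : v a ∈ A.image ⇑v := Finset.mem_image_of_mem _ ha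
    have h1 := hspec _ hmem
    have : e (v a) = f (v a) := he _ hmem
    rw [this]
    exact v.2 h1.2
  let γ : Minj ℕ := ⟨(e : ℕ → ℕ), e.injective⟩
  let γ' : Minj ℕ := ⟨(e.symm : ℕ → ℕ), e.symm.injective⟩
  have hγ : γ' * γ = 1 := Subtype.ext (funext fun n => e.symm_apply_apply n)
  have h1 : (γ * v) • x = x := hA (γ * v) (fun a ha => heva a ha)
  have h2 : (γ * w) • x = x := hA (γ * w) (fun a ha => by
    show e (w a) = a
    rw [← hvw a ha]
    exact heva a ha)
  calc v • x = ((γ' * γ) * v) • x := by rw [hγ, one_mul]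
    _ = γ' • ((γ * v) • x) := by rw [mul_assoc, mul_smul γ' (γ * v) x]
    _ = γ' • ((γ * w) • x) := by rw [h1, h2]
    _ = ((γ' * γ) * w) • x := by rw [mul_assoc, mul_smul γ' (γ * w) x]
    _ = w • x := by rw [hγ, one_mul]

/-- If `x` is supported on the finite set `A`, then `w • x` is supported on `w(A)`. -/
lemma supported_image {x : X} {A : Finset ℕ}
    (hA : Supported (A : Set ℕ) x) (w : Minj ℕ) :
    Supported ((A.image ⇑w : Finset ℕ) : Set ℕ) (w • x) := by
  intro u hu
  rw [← mul_smul]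
  exact smul_eq_smul_of_eqOn hA (fun a ha => hu (w a) (by
    exact_mod_cast Finset.mem_image_of_mem _ ha))

lemma supp_subset_of_supported {x : X} {A : Finset ℕ}
    (hA : Supported (A : Set ℕ) x) : supp (U := ℕ) x ⊆ ↑A :=
  fun _ hi => hi A hA

end ExtensionLemma

/-- Two elements are disjointly supported if their supports are disjoint. -/
def DisjSupp {X : Type*} [MulAction (Minj ℕ) X] (x y : X) : Prop :=
  Disjoint (supp (U := ℕ) x) (supp (U := ℕ) y)

/-- A parsummable category: a tame `M(ℕ)`-category together with a distinguished object `0`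
supported on the empty set and a sum operation, defined on disjointly supported objects and
morphisms, which is strictly unital, associative and commutative and strictly commutes with
the `M(ℕ)`-action. -/
structure ParSum (C : Type*) [Category C] [MulAction (Minj ℕ) C] extends MCat ℕ C where
  tame : ∀ x : C, FinSupported (U := ℕ) x
  zero : C
  supp_zero : Supported (∅ : Set ℕ) zero
  add : C → C → C
  addHom : ∀ {x x' y y' : C}, DisjSupp x x' → DisjSupp y y' →
    (x ⟶ y) → (x' ⟶ y') → (add x x' ⟶ add y y')
  addHom_id : ∀ {x x' : C} (h : DisjSupp x x'), addHom h h (𝟙 x) (𝟙 x') = 𝟙 (add x x')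
  addHom_comp : ∀ {x y z x' y' z' : C} (hx : DisjSupp x x') (hy : DisjSupp y y')
    (hz : DisjSupp z z') (f : x ⟶ y) (g : y ⟶ z) (f' : x' ⟶ y') (g' : y' ⟶ z'),
    addHom hx hz (f ≫ g) (f' ≫ g') = addHom hx hy f f' ≫ addHom hy hz g g'
  add_zero' : ∀ x : C, add x zero = x
  zero_add' : ∀ x : C, add zero x = x
  addHom_zero : ∀ {x y : C} (hx : DisjSupp x zero) (hy : DisjSupp y zero) (f : x ⟶ y),
    addHom hx hy f (𝟙 zero) = eqToHom (add_zero' x) ≫ f ≫ eqToHom (add_zero' y).symm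
  zero_addHom : ∀ {x y : C} (hx : DisjSupp zero x) (hy : DisjSupp zero y) (f : x ⟶ y),
    addHom hx hy (𝟙 zero) f = eqToHom (zero_add' x) ≫ f ≫ eqToHom (zero_add' y).symm
  add_comm' : ∀ {x y : C}, DisjSupp x y → add x y = add y x
  addHom_comm : ∀ {x y x' y' : C} (hx : DisjSupp x x') (hy : DisjSupp y y')
    (hx' : DisjSupp x' x) (hy' : DisjSupp y' y) (f : x ⟶ y) (f' : x' ⟶ y'),
    addHom hx' hy' f' f = eqToHom (add_comm' hx).symm ≫ addHom hx hy f f' ≫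
      eqToHom (add_comm' hy)
  add_assoc' : ∀ {x y z : C}, DisjSupp x y → DisjSupp y z → DisjSupp x z →
    add (add x y) z = add x (add y z)
  addHom_assoc : ∀ {x y z x' y' z' : C}
    (hxy : DisjSupp x y) (hyz : DisjSupp y z) (hxz : DisjSupp x z)
    (hxy' : DisjSupp x' y') (hyz' : DisjSupp y' z') (hxz' : DisjSupp x' z')
    (hs : DisjSupp (add x y) z) (hs' : DisjSupp (add x' y') z')
    (ht : DisjSupp x (add y z)) (ht' : DisjSupp x' (add y' z'))
    (f : x ⟶ x') (g : y ⟶ y') (k : z ⟶ z'),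
    addHom hs hs' (addHom hxy hxy' f g) k =
      eqToHom (add_assoc' hxy hyz hxz) ≫ addHom ht ht' f (addHom hyz hyz' g k) ≫
        eqToHom (add_assoc' hxy' hyz' hxz').symm
  smul_add : ∀ (u : Minj ℕ) {x y : C}, DisjSupp x y → u • add x y = add (u • x) (u • y)
  act_add : ∀ (u : Minj ℕ) {x x' y y' : C} (hx : DisjSupp x x') (hy : DisjSupp y y')
    (hux : DisjSupp (u • x) (u • x')) (huy : DisjSupp (u • y) (u • y'))
    (f : x ⟶ y) (f' : x' ⟶ y'),
    toMCat.act u (addHom hx hy f f') =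
      eqToHom (smul_add u hx) ≫ addHom hux huy (toMCat.act u f) (toMCat.act u f') ≫
        eqToHom (smul_add u hy).symm
  ι_add : ∀ (u : Minj ℕ) {x y : C} (hxy : DisjSupp x y) (hu : DisjSupp (u • x) (u • y)),
    (toMCat.ι u (add x y)).hom =
      addHom hxy hu (toMCat.ι u x).hom (toMCat.ι u y).hom ≫ eqToHom (smul_add u hxy).symm

section Phi

variable {C : Type*} [Category C] [MulAction (Minj ℕ) C]

/-- The component `φ^i = φ(i,-)` of an injection `φ : {1,2} × ℕ → ℕ`, as an element
of `M(ℕ)`. -/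
def phiC (φ : Fin 2 × ℕ → ℕ) (hφ : Function.Injective φ) (i : Fin 2) : Minj ℕ :=
  ⟨fun n => φ (i, n), fun _ _ hab => congrArg Prod.snd (hφ hab)⟩

lemma disjoint_phiC_ranges (φ : Fin 2 × ℕ → ℕ) (hφ : Function.Injective φ) :
    Disjoint (Set.range ⇑(phiC φ hφ 0)) (Set.range ⇑(phiC φ hφ 1)) := by
  rw [Set.disjoint_left]
  rintro b ⟨n, rfl⟩ ⟨m, hm⟩
  have h1 : (1 : Fin 2) = 0 := congrArg Prod.fst (hφ hm)
  exact absurd h1 (by decide)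

lemma range_mul_subset (u v : Minj ℕ) : Set.range ⇑(u * v) ⊆ Set.range ⇑u := by
  rintro b ⟨a, rfl⟩
  exact ⟨v a, rfl⟩

lemma range_mul_disjoint (u : Minj ℕ) {v w : Minj ℕ}
    (hd : Disjoint (Set.range ⇑v) (Set.range ⇑w)) :
    Disjoint (Set.range ⇑(u * v)) (Set.range ⇑(u * w)) := by
  rw [Set.disjoint_left] at hd ⊢
  rintro b ⟨a, rfl⟩ ⟨a', ha'⟩
  exact hd ⟨a, rfl⟩ ⟨a', u.2 ha'⟩

namespace ParSum

lemma supp_smul_subset (h : ParSum C) (w : Minj ℕ) (x : C) :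
    supp (U := ℕ) (w • x) ⊆ Set.range ⇑w := by
  obtain ⟨A, hA⟩ := h.tame x
  intro i hi
  have := hi (A.image ⇑w) (supported_image hA w)
  obtain ⟨a, _, rfl⟩ := Finset.mem_image.mp this
  exact ⟨a, rfl⟩

/-- Objects moved into disjoint ranges are disjointly supported. -/
lemma disj_smul (h : ParSum C) {w w' : Minj ℕ}
    (hd : Disjoint (Set.range ⇑w) (Set.range ⇑w')) (x y : C) :
    DisjSupp (w • x) (w' • y) :=
  Disjoint.mono (h.supp_smul_subset w x) (h.supp_smul_subset w' y) hd

lemma supported_add_finset (h : ParSum C) {x y : C} (hd : DisjSupp x y) {A B : Finset ℕ}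
    (hx : Supported (A : Set ℕ) x) (hy : Supported (B : Set ℕ) y) :
    Supported ((A ∪ B : Finset ℕ) : Set ℕ) (h.add x y) := by
  intro u hu
  rw [h.smul_add u hd, hx u (fun a ha => hu a (by simp [ha])),
    hy u (fun a ha => hu a (by simp [ha]))]

lemma supp_add_subset (h : ParSum C) {x y : C} (hd : DisjSupp x y) :
    supp (U := ℕ) (h.add x y) ⊆ supp (U := ℕ) x ∪ supp (U := ℕ) y := by
  intro i hi
  by_contra hc
  simp only [Set.mem_union, not_or] at hc
  obtain ⟨hcx, hcy⟩ := hc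
  simp only [supp, Set.mem_setOf_eq, not_forall] at hcx hcy
  obtain ⟨A', hA', hiA'⟩ := hcx
  obtain ⟨B', hB', hiB'⟩ := hcy
  have := hi (A' ∪ B') (h.supported_add_finset hd hA' hB')
  simp only [Finset.mem_union] at this
  tauto

lemma supp_add_smul_subset (h : ParSum C) (u v : Minj ℕ)
    (hd : Disjoint (Set.range ⇑u) (Set.range ⇑v)) (x y : C) :
    supp (U := ℕ) (h.add (u • x) (v • y)) ⊆ Set.range ⇑u ∪ Set.range ⇑v := by
  intro i hi
  have := h.supp_add_subset (h.disj_smul hd x y) hi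
  rcases this with hl | hr
  · exact Or.inl (h.supp_smul_subset u x hl)
  · exact Or.inr (h.supp_smul_subset v y hr)

lemma smul_zero' (h : ParSum C) (u : Minj ℕ) : u • h.zero = h.zero :=
  h.supp_zero u (fun a ha => absurd ha (Set.notMem_empty a))

lemma supp_zero_subset (h : ParSum C) : supp (U := ℕ) h.zero ⊆ (∅ : Set ℕ) := by
  intro i hi
  have := hi ∅ (by intro u _; exact h.smul_zero' u)
  simp at this

lemma disj_zero_right (h : ParSum C) (x : C) : DisjSupp x h.zero :=
  Disjoint.mono_right h.supp_zero_subset (by simp)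

lemma disj_zero_left (h : ParSum C) (x : C) : DisjSupp h.zero x :=
  Disjoint.mono_left h.supp_zero_subset (by simp)

end ParSum

end Phi

section MonDefs

variable {C : Type*} [Category C] [MulAction (Minj ℕ) C]

/-- The tensor product `φ_*(x,y) = φ¹ • x + φ² • y` on objects. -/
def Fobj (h : ParSum C) (φ : Fin 2 × ℕ → ℕ) (hφ : Function.Injective φ) (x y : C) : C := h.add (phiC φ hφ 0 • x) (phiC φ hφ 1 • y)

lemma d12 (h : ParSum C) (φ : Fin 2 × ℕ → ℕ) (hφ : Function.Injective φ) (x y : C) : DisjSupp (phiC φ hφ 0 • x) (phiC φ hφ 1 • y) :=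
  h.disj_smul (disjoint_phiC_ranges φ hφ) x y

lemma d21 (h : ParSum C) (φ : Fin 2 × ℕ → ℕ) (hφ : Function.Injective φ) (x y : C) : DisjSupp (phiC φ hφ 1 • x) (phiC φ hφ 0 • y) :=
  h.disj_smul (disjoint_phiC_ranges φ hφ).symm x y

/-- The tensor product `φ_*(f,g) = φ¹_*(f) + φ²_*(g)` on morphisms. -/
def Fhom (h : ParSum C) (φ : Fin 2 × ℕ → ℕ) (hφ : Function.Injective φ) {x x' y y' : C} (f : x ⟶ x') (g : y ⟶ y') :
    Fobj h φ hφ x y ⟶ Fobj h φ hφ x' y' :=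
  h.addHom (d12 h φ hφ x y) (d12 h φ hφ x' y')
    (h.toMCat.act (phiC φ hφ 0) f) (h.toMCat.act (phiC φ hφ 1) g)

/-- The symmetry isomorphism `τ_{x,y} = [φ∘t, φ]^{x,y} : φ_*(x,y) ⟶ φ_*(y,x)`. -/
def braiding (h : ParSum C) (φ : Fin 2 × ℕ → ℕ) (hφ : Function.Injective φ) (x y : C) : Fobj h φ hφ x y ⟶ Fobj h φ hφ y x :=
  h.addHom (d12 h φ hφ x y) (d21 h φ hφ x y)
    (h.toMCat.tw (phiC φ hφ 1) (phiC φ hφ 0) x) (h.toMCat.tw (phiC φ hφ 0) (phiC φ hφ 1) y) ≫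
    eqToHom (h.add_comm' (d21 h φ hφ x y))

lemma zero_right_eq (h : ParSum C) (φ : Fin 2 × ℕ → ℕ) (hφ : Function.Injective φ) (x : C) : phiC φ hφ 0 • x = Fobj h φ hφ x h.zero := by
  show _ = h.add _ _
  rw [h.smul_zero' (phiC φ hφ 1), h.add_zero']

lemma zero_left_eq (h : ParSum C) (φ : Fin 2 × ℕ → ℕ) (hφ : Function.Injective φ) (x : C) : phiC φ hφ 1 • x = Fobj h φ hφ h.zero x := by
  show _ = h.add _ _
  rw [h.smul_zero' (phiC φ hφ 0), h.zero_add']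

/-- The right unit isomorphism `[φ¹,1]^x : x ⟶ φ_*(x,0)`. -/
def rightUnitor (h : ParSum C) (φ : Fin 2 × ℕ → ℕ) (hφ : Function.Injective φ) (x : C) : x ⟶ Fobj h φ hφ x h.zero :=
  eqToHom (one_smul (Minj ℕ) x).symm ≫ h.toMCat.tw (phiC φ hφ 0) 1 x ≫
    eqToHom (zero_right_eq h φ hφ x)

/-- The left unit isomorphism `[φ²,1]^x : x ⟶ φ_*(0,x)`. -/
def leftUnitor (h : ParSum C) (φ : Fin 2 × ℕ → ℕ) (hφ : Function.Injective φ) (x : C) : x ⟶ Fobj h φ hφ h.zero x :=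
  eqToHom (one_smul (Minj ℕ) x).symm ≫ h.toMCat.tw (phiC φ hφ 1) 1 x ≫
    eqToHom (zero_left_eq h φ hφ x)

lemma d00_01 (h : ParSum C) (φ : Fin 2 × ℕ → ℕ) (hφ : Function.Injective φ) (x y : C) :
    DisjSupp ((phiC φ hφ 0 * phiC φ hφ 0) • x) ((phiC φ hφ 0 * phiC φ hφ 1) • y) :=
  h.disj_smul (range_mul_disjoint _ (disjoint_phiC_ranges φ hφ)) x y

lemma d10_11 (h : ParSum C) (φ : Fin 2 × ℕ → ℕ) (hφ : Function.Injective φ) (y z : C) :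
    DisjSupp ((phiC φ hφ 1 * phiC φ hφ 0) • y) ((phiC φ hφ 1 * phiC φ hφ 1) • z) :=
  h.disj_smul (range_mul_disjoint _ (disjoint_phiC_ranges φ hφ)) y z

lemma d0_10 (h : ParSum C) (φ : Fin 2 × ℕ → ℕ) (hφ : Function.Injective φ) (x y : C) : DisjSupp (phiC φ hφ 0 • x) ((phiC φ hφ 1 * phiC φ hφ 0) • y) :=
  h.disj_smul (Disjoint.mono_right (range_mul_subset _ _) (disjoint_phiC_ranges φ hφ)) x y

lemma d0_11 (h : ParSum C) (φ : Fin 2 × ℕ → ℕ) (hφ : Function.Injective φ) (x z : C) : DisjSupp (phiC φ hφ 0 • x) ((phiC φ hφ 1 * phiC φ hφ 1) • z) :=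
  h.disj_smul (Disjoint.mono_right (range_mul_subset _ _) (disjoint_phiC_ranges φ hφ)) x z

lemma dI1 (h : ParSum C) (φ : Fin 2 × ℕ → ℕ) (hφ : Function.Injective φ) (x y z : C) :
    DisjSupp (h.add ((phiC φ hφ 0 * phiC φ hφ 0) • x) ((phiC φ hφ 0 * phiC φ hφ 1) • y))
      (phiC φ hφ 1 • z) := by
  have h1 : supp (U := ℕ)
      (h.add ((phiC φ hφ 0 * phiC φ hφ 0) • x) ((phiC φ hφ 0 * phiC φ hφ 1) • y)) ⊆
      Set.range ⇑(phiC φ hφ 0) := by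
    intro i hi
    rcases h.supp_add_smul_subset _ _ (range_mul_disjoint _ (disjoint_phiC_ranges φ hφ)) x y hi
      with h2 | h2
    · exact range_mul_subset _ _ h2
    · exact range_mul_subset _ _ h2
  exact Disjoint.mono h1 (h.supp_smul_subset _ z) (disjoint_phiC_ranges φ hφ)

lemma dI2 (h : ParSum C) (φ : Fin 2 × ℕ → ℕ) (hφ : Function.Injective φ) (x y z : C) :
    DisjSupp (h.add (phiC φ hφ 0 • x) ((phiC φ hφ 1 * phiC φ hφ 0) • y))
      ((phiC φ hφ 1 * phiC φ hφ 1) • z) := by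
  have h1 : supp (U := ℕ)
      (h.add (phiC φ hφ 0 • x) ((phiC φ hφ 1 * phiC φ hφ 0) • y)) ⊆
      Set.range ⇑(phiC φ hφ 0) ∪ Set.range ⇑(phiC φ hφ 1 * phiC φ hφ 0) := by
    intro i hi
    exact h.supp_add_smul_subset _ _
      (Disjoint.mono_right (range_mul_subset _ _) (disjoint_phiC_ranges φ hφ)) x y hi
  refine Disjoint.mono h1 (h.supp_smul_subset _ z) (Set.disjoint_union_left.mpr ⟨?_, ?_⟩)
  · exact Disjoint.mono_right (range_mul_subset _ _) (disjoint_phiC_ranges φ hφ)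
  · exact range_mul_disjoint _ (disjoint_phiC_ranges φ hφ)

lemma dI3 (h : ParSum C) (φ : Fin 2 × ℕ → ℕ) (hφ : Function.Injective φ) (x y z : C) :
    DisjSupp (phiC φ hφ 0 • x)
      (h.add ((phiC φ hφ 1 * phiC φ hφ 0) • y) ((phiC φ hφ 1 * phiC φ hφ 1) • z)) := by
  have h1 : supp (U := ℕ)
      (h.add ((phiC φ hφ 1 * phiC φ hφ 0) • y) ((phiC φ hφ 1 * phiC φ hφ 1) • z)) ⊆
      Set.range ⇑(phiC φ hφ 1) := by
    intro i hi
    rcases h.supp_add_smul_subset _ _ (range_mul_disjoint _ (disjoint_phiC_ranges φ hφ)) y z hi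
      with h2 | h2
    · exact range_mul_subset _ _ h2
    · exact range_mul_subset _ _ h2
  exact Disjoint.mono (h.supp_smul_subset _ x) h1 (disjoint_phiC_ranges φ hφ)

lemma assocSrc_eq (h : ParSum C) (φ : Fin 2 × ℕ → ℕ) (hφ : Function.Injective φ) (x y z : C) :
    Fobj h φ hφ (Fobj h φ hφ x y) z =
      h.add (h.add ((phiC φ hφ 0 * phiC φ hφ 0) • x) ((phiC φ hφ 0 * phiC φ hφ 1) • y))
        (phiC φ hφ 1 • z) := by
  show h.add (phiC φ hφ 0 • h.add (phiC φ hφ 0 • x) (phiC φ hφ 1 • y)) (phiC φ hφ 1 • z) = _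
  rw [h.smul_add (phiC φ hφ 0) (d12 h φ hφ x y), ← mul_smul, ← mul_smul]

lemma assocTgt_eq (h : ParSum C) (φ : Fin 2 × ℕ → ℕ) (hφ : Function.Injective φ) (x y z : C) :
    Fobj h φ hφ x (Fobj h φ hφ y z) =
      h.add (phiC φ hφ 0 • x)
        (h.add ((phiC φ hφ 1 * phiC φ hφ 0) • y) ((phiC φ hφ 1 * phiC φ hφ 1) • z)) := by
  show h.add (phiC φ hφ 0 • x) (phiC φ hφ 1 • h.add (phiC φ hφ 0 • y) (phiC φ hφ 1 • z)) = _
  rw [h.smul_add (phiC φ hφ 1) (d12 h φ hφ y z), ← mul_smul, ← mul_smul]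

lemma assocMid_eq (h : ParSum C) (φ : Fin 2 × ℕ → ℕ) (hφ : Function.Injective φ) (x y z : C) :
    h.add (h.add (phiC φ hφ 0 • x) ((phiC φ hφ 1 * phiC φ hφ 0) • y))
        ((phiC φ hφ 1 * phiC φ hφ 1) • z) =
      h.add (phiC φ hφ 0 • x)
        (h.add ((phiC φ hφ 1 * phiC φ hφ 0) • y) ((phiC φ hφ 1 * phiC φ hφ 1) • z)) :=
  h.add_assoc' (d0_10 h φ hφ x y) (d10_11 h φ hφ y z) (d0_11 h φ hφ x z)

/-- The associativity isomorphism
`α_{x,y,z} = [φ(1⊔φ), φ(φ⊔1)]^{x,y,z} : φ_*(φ_*(x,y),z) ⟶ φ_*(x,φ_*(y,z))`. -/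
def parAssociator (h : ParSum C) (φ : Fin 2 × ℕ → ℕ) (hφ : Function.Injective φ) (x y z : C) :
    Fobj h φ hφ (Fobj h φ hφ x y) z ⟶ Fobj h φ hφ x (Fobj h φ hφ y z) :=
  eqToHom (assocSrc_eq h φ hφ x y z) ≫
    h.addHom (dI1 h φ hφ x y z) (dI2 h φ hφ x y z)
      (h.addHom (d00_01 h φ hφ x y) (d0_10 h φ hφ x y)
        (h.toMCat.tw (phiC φ hφ 0) (phiC φ hφ 0 * phiC φ hφ 0) x)
        (h.toMCat.tw (phiC φ hφ 1 * phiC φ hφ 0) (phiC φ hφ 0 * phiC φ hφ 1) y))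
      (h.toMCat.tw (phiC φ hφ 1 * phiC φ hφ 1) (phiC φ hφ 1) z) ≫
    eqToHom ((assocMid_eq h φ hφ x y z).trans (assocTgt_eq h φ hφ x y z).symm)

end MonDefs


lemma CategoryTheory.Iso.inv_comp_hom_heq {C : Type*} [Category C] {x a b a' b' : C}
    {e₁ : x ≅ a} {e₂ : x ≅ b} {f₁ : x ≅ a'} {f₂ : x ≅ b'} (ha : a = a') (hb : b = b')
    (h₁ : e₁.hom ≍ f₁.hom) (h₂ : e₂.hom ≍ f₂.hom) : e₁.inv ≫ e₂.hom ≍ f₁.inv ≫ f₂.hom := by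
  subst ha hb
  rw [Iso.ext (eq_of_heq h₁), eq_of_heq h₂]

namespace MCat

variable {U C : Type*} [Category C] [MulAction (Minj U) C] (h : MCat U C)

lemma tw_comp (u v w : Minj U) (x : C) : h.tw v u x ≫ h.tw w v x = h.tw w u x := by
  simp [tw]

lemma tw_self (u : Minj U) (x : C) : h.tw u u x = 𝟙 (u • x) := by
  simp [tw]

lemma ι_mul_heq (u v : Minj U) (x : C) :
    (h.ι u x ≪≫ h.ι v (u • x)).hom ≍ (h.ι (v * u) x).hom := by
  rw [Iso.trans_hom, h.ι_mul]
  exact comp_eqToHom_heq _ _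

lemma act_tw_heq (w v u : Minj U) (x : C) : h.act w (h.tw v u x) ≍ h.tw (w * v) (w * u) x := by
  have e : h.act w (h.tw v u x) =
      (h.ι u x ≪≫ h.ι w (u • x)).inv ≫ (h.ι v x ≪≫ h.ι w (v • x)).hom := by
    simp [act, tw]
  rw [e]
  exact Iso.inv_comp_hom_heq (mul_smul w u x).symm (mul_smul w v x).symm
    (h.ι_mul_heq u w x) (h.ι_mul_heq v w x)

lemma tw_smul_heq (v u w : Minj U) (x : C) : h.tw v u (w • x) ≍ h.tw (v * w) (u * w) x := by
  have e : h.tw v u (w • x) =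
      (h.ι w x ≪≫ h.ι u (w • x)).inv ≫ (h.ι w x ≪≫ h.ι v (w • x)).hom := by
    simp [tw]
  rw [e]
  exact Iso.inv_comp_hom_heq (mul_smul u w x).symm (mul_smul v w x).symm
    (h.ι_mul_heq w u x) (h.ι_mul_heq w v x)

lemma act_heq_act (w : Minj U) {x y x' y' : C} {f : x ⟶ y} {f' : x' ⟶ y'} (hx : x = x')
    (hy : y = y') (hf : f ≍ f') : h.act w f ≍ h.act w f' := by
  subst hx hy
  rw [eq_of_heq hf]

end MCat

lemma range_mul_mul_subset (u v w : Minj ℕ) : Set.range ⇑(u * v * w) ⊆ Set.range u :=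
  (range_mul_subset _ _).trans (range_mul_subset _ _)

lemma disjoint_range_mul {u v : Minj ℕ} (hd : Disjoint (Set.range u) (Set.range v))
    (w w' : Minj ℕ) : Disjoint (Set.range ⇑(u * w)) (Set.range ⇑(v * w')) :=
  Disjoint.mono (range_mul_subset u w) (range_mul_subset v w') hd

abbrev DisjointRanges {ι : Type*} (u : ι → Minj ℕ) (l : List ι) : Prop :=
  l.Pairwise fun i j => Disjoint (Set.range (u i)) (Set.range (u j))

namespace DisjointRanges

variable {ι : Type*} {u : ι → Minj ℕ} {l l' : List ι}

lemma mul_left (hu : DisjointRanges u l) (w : Minj ℕ) : DisjointRanges (fun i => w * u i) l :=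
  hu.imp (range_mul_disjoint w)

lemma congr {u' : ι → Minj ℕ} (hu : DisjointRanges u l) (e : ∀ i ∈ l, u' i = u i) :
    DisjointRanges u' l :=
  hu.imp_of_mem fun ha hb hd => by rwa [e _ ha, e _ hb]

lemma perm (hu : DisjointRanges u l) (p : l.Perm l') : DisjointRanges u l' :=
  (p.pairwise_iff fun hd => hd.symm).mp hu

lemma of_cons_append_left {i : ι} (hu : DisjointRanges u (i :: (l ++ l'))) :
    DisjointRanges u (i :: l) :=
  hu.sublist ((List.sublist_append_left _ _).cons_cons i)

lemma of_cons_append_right {i : ι} (hu : DisjointRanges u (i :: (l ++ l'))) :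
    DisjointRanges u (i :: l') :=
  hu.sublist ((List.sublist_append_right _ _).cons_cons i)

lemma disjoint_first_two {i j : ι} (hu : DisjointRanges u (j :: i :: l)) :
    Disjoint (Set.range (u j)) (Set.range (u i)) :=
  List.rel_of_pairwise_cons hu List.mem_cons_self

lemma of_cons_cons {i j : ι} (hu : DisjointRanges u (j :: i :: l)) : DisjointRanges u (j :: l) :=
  hu.sublist ((List.sublist_cons_self i l).cons_cons j)

end DisjointRanges

namespace ParSum

section

variable {C : Type*} [Category C] [MulAction (Minj ℕ) C] (h : ParSum C)

lemma addHom_heq_addHom {x x' y y' x₂ x₂' y₂ y₂' : C} {hd : DisjSupp x x'} {hd' : DisjSupp y y'}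
    {hd₂ : DisjSupp x₂ x₂'} {hd₂' : DisjSupp y₂ y₂'} {f : x ⟶ y} {f' : x' ⟶ y'}
    {g : x₂ ⟶ y₂} {g' : x₂' ⟶ y₂'} (hx : x = x₂) (hx' : x' = x₂') (hy : y = y₂)
    (hy' : y' = y₂') (hf : f ≍ g) (hf' : f' ≍ g') :
    h.addHom hd hd' f f' ≍ h.addHom hd₂ hd₂' g g' := by
  subst hx hx' hy hy'
  rw [eq_of_heq hf, eq_of_heq hf']

lemma addHom_assoc_heq {x y z x' y' z' : C}
    (hxy : DisjSupp x y) (hyz : DisjSupp y z) (hxz : DisjSupp x z)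
    (hxy' : DisjSupp x' y') (hyz' : DisjSupp y' z') (hxz' : DisjSupp x' z')
    (hs : DisjSupp (h.add x y) z) (hs' : DisjSupp (h.add x' y') z')
    (ht : DisjSupp x (h.add y z)) (ht' : DisjSupp x' (h.add y' z'))
    (f : x ⟶ x') (g : y ⟶ y') (k : z ⟶ z') :
    h.addHom hs hs' (h.addHom hxy hxy' f g) k ≍ h.addHom ht ht' f (h.addHom hyz hyz' g k) :=
  (conj_eqToHom_iff_heq' _ _ _ _).mp (h.addHom_assoc hxy hyz hxz hxy' hyz' hxz' hs hs' ht ht' f g k)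

lemma addHom_comm_heq {x y x' y' : C} (hx : DisjSupp x x') (hy : DisjSupp y y')
    (hx' : DisjSupp x' x) (hy' : DisjSupp y' y) (f : x ⟶ y) (f' : x' ⟶ y') :
    h.addHom hx' hy' f' f ≍ h.addHom hx hy f f' :=
  (conj_eqToHom_iff_heq' _ _ _ _).mp (h.addHom_comm hx hy hx' hy' f f')

lemma addHom_id_zero_heq {x y : C} (hx : DisjSupp x h.zero) (hy : DisjSupp y h.zero)
    (f : x ⟶ y) : h.addHom hx hy f (𝟙 h.zero) ≍ f :=
  (conj_eqToHom_iff_heq' _ _ _ _).mp (h.addHom_zero hx hy f)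

lemma id_zero_addHom_heq {x y : C} (hx : DisjSupp h.zero x) (hy : DisjSupp h.zero y)
    (f : x ⟶ y) : h.addHom hx hy (𝟙 h.zero) f ≍ f :=
  (conj_eqToHom_iff_heq' _ _ _ _).mp (h.zero_addHom hx hy f)

lemma act_addHom_heq (u : Minj ℕ) {x x' y y' : C} (hx : DisjSupp x x') (hy : DisjSupp y y')
    (hux : DisjSupp (u • x) (u • x')) (huy : DisjSupp (u • y) (u • y'))
    (f : x ⟶ y) (f' : x' ⟶ y') :
    h.act u (h.addHom hx hy f f') ≍ h.addHom hux huy (h.act u f) (h.act u f') :=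
  (conj_eqToHom_iff_heq' _ _ _ _).mp (h.act_add u hx hy hux huy f f')

def addIso {x x' y y' : C} (hx : DisjSupp x x') (hy : DisjSupp y y') (e : x ≅ y) (e' : x' ≅ y') :
    h.add x x' ≅ h.add y y' where
  hom := h.addHom hx hy e.hom e'.hom
  inv := h.addHom hy hx e.inv e'.inv
  hom_inv_id := by rw [← h.addHom_comp, e.hom_inv_id, e'.hom_inv_id, h.addHom_id]
  inv_hom_id := by rw [← h.addHom_comp, e.inv_hom_id, e'.inv_hom_id, h.addHom_id]

lemma ι_add_heq (u : Minj ℕ) {x y : C} (hxy : DisjSupp x y) (hu : DisjSupp (u • x) (u • y)) :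
    (h.ι u (h.add x y)).hom ≍ (h.addIso hxy hu (h.ι u x) (h.ι u y)).hom := by
  rw [h.ι_add u hxy hu]
  exact comp_eqToHom_heq _ _

lemma tw_add_heq (v u : Minj ℕ) {x y : C} (hxy : DisjSupp x y) (hu : DisjSupp (u • x) (u • y))
    (hv : DisjSupp (v • x) (v • y)) :
    h.tw v u (h.add x y) ≍ h.addHom hu hv (h.tw v u x) (h.tw v u y) := by
  have e := Iso.inv_comp_hom_heq (h.smul_add u hxy) (h.smul_add v hxy)
    (h.ι_add_heq u hxy hu) (h.ι_add_heq v hxy hv)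
  rwa [addIso, addIso, ← h.addHom_comp] at e

lemma addHom_zero_zero_heq (hz hz' : DisjSupp h.zero h.zero) (f g : h.zero ⟶ h.zero) :
    h.addHom hz hz' f g ≍ f ≫ g := by
  have e : h.addHom hz hz' f g = h.addHom hz hz f (𝟙 _) ≫ h.addHom hz hz' (𝟙 _) g := by
    rw [← h.addHom_comp, Category.comp_id, Category.id_comp]
  rw [e]
  exact heq_comp (h.add_zero' _) (h.add_zero' _) (h.add_zero' _)
    (h.addHom_id_zero_heq _ _ f) (h.id_zero_addHom_heq _ _ g)

/-- `ι(u,0)` is an automorphism `κ` of `0 = 0 + 0` with `κ = κ + κ = κ ≫ κ`, hence trivial. -/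
lemma ι_zero_heq (u : Minj ℕ) : (h.ι u h.zero).hom ≍ 𝟙 h.zero := by
  have q := h.smul_zero' u
  set κ : h.zero ⟶ h.zero := (h.ι u h.zero).hom ≫ eqToHom q
  have hκ : (h.ι u h.zero).hom ≍ κ := (comp_eqToHom_heq _ _).symm
  have hz := h.disj_zero_right h.zero
  have hzu : DisjSupp (u • h.zero) (u • h.zero) := by rw [q]; exact hz
  have hadd : (h.ι u (h.add h.zero h.zero)).hom ≍ (h.ι u h.zero).hom := by
    rw [h.add_zero']
  have idem : κ = κ ≫ κ := eq_of_heq <| hκ.symm.trans <| hadd.symm.trans <|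
    (h.ι_add_heq u hz hzu).trans <|
      (h.addHom_heq_addHom rfl rfl q q hκ hκ).trans (h.addHom_zero_zero_heq hz hz κ κ)
  have : κ = 𝟙 h.zero := by
    have : IsIso κ := by dsimp [κ]; infer_instance
    simpa using (cancel_epi κ).1 (idem.symm.trans (Category.comp_id κ).symm)
  exact hκ.trans (heq_of_eq this)

lemma tw_zero_heq (v u : Minj ℕ) : h.tw v u h.zero ≍ 𝟙 h.zero := by
  simpa [MCat.tw] using Iso.inv_comp_hom_heq (f₁ := Iso.refl h.zero) (f₂ := Iso.refl h.zero)
    (h.smul_zero' u) (h.smul_zero' v) (h.ι_zero_heq u) (h.ι_zero_heq v)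

lemma disjSupp_add_left {a b c : C} (hab : DisjSupp a b) (hac : DisjSupp a c)
    (hbc : DisjSupp b c) : DisjSupp (h.add a b) c :=
  Disjoint.mono_left (h.supp_add_subset hab) (Set.disjoint_union_left.2 ⟨hac, hbc⟩)

lemma disjSupp_add_right {a b c : C} (hab : DisjSupp a b) (hac : DisjSupp a c)
    (hbc : DisjSupp b c) : DisjSupp a (h.add b c) :=
  Disjoint.mono_right (h.supp_add_subset hbc) (Set.disjoint_union_right.2 ⟨hab, hac⟩)

lemma add_left_comm {a b c : C} (hab : DisjSupp a b) (hac : DisjSupp a c) (hbc : DisjSupp b c) :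
    h.add a (h.add b c) = h.add b (h.add a c) := by
  rw [← h.add_assoc' hab hbc hac, h.add_comm' hab, h.add_assoc' (Disjoint.symm hab) hac hbc]

lemma addHom_left_comm_heq {a b c a' b' c' : C} (hab : DisjSupp a b) (hac : DisjSupp a c)
    (hbc : DisjSupp b c) (hab' : DisjSupp a' b') (hac' : DisjSupp a' c') (hbc' : DisjSupp b' c')
    {hd₁ hd₂ hd₃ hd₄} (f : a ⟶ a') (g : b ⟶ b') (k : c ⟶ c') :
    h.addHom hd₁ hd₂ f (h.addHom hbc hbc' g k) ≍
      h.addHom hd₃ hd₄ g (h.addHom hac hac' f k) :=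
  (h.addHom_assoc_heq hab hbc hac hab' hbc' hac' (h.disjSupp_add_left hab hac hbc)
    (h.disjSupp_add_left hab' hac' hbc') _ _ f g k).symm.trans <|
  (h.addHom_heq_addHom (hd₂ := h.disjSupp_add_left (Disjoint.symm hab) hbc hac)
    (hd₂' := h.disjSupp_add_left (Disjoint.symm hab') hbc' hac') (h.add_comm' hab) rfl
    (h.add_comm' hab') rfl
    (h.addHom_comm_heq _ _ (Disjoint.symm hab) (Disjoint.symm hab') f g).symm HEq.rfl).trans <|
  h.addHom_assoc_heq (Disjoint.symm hab) hac hbc (Disjoint.symm hab') hac' hbc' _ _ _ _ g f k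

variable {ι : Type*}

def listSum (x : ι → C) (u : ι → Minj ℕ) : List ι → C
  | [] => h.zero
  | i :: l => h.add (u i • x i) (listSum x u l)

lemma supp_listSum_subset (x : ι → C) {u : ι → Minj ℕ} {l : List ι} (hu : DisjointRanges u l) :
    supp (U := ℕ) (h.listSum x u l) ⊆ ⋃ i ∈ l, Set.range (u i) := by
  induction l with
  | nil => exact h.supp_zero_subset.trans (Set.empty_subset _)
  | cons i l ih =>
    have hd : DisjSupp (u i • x i) (h.listSum x u l) :=
      Disjoint.mono (h.supp_smul_subset _ _) (ih hu.of_cons)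
        (Set.disjoint_iUnion₂_right.2 fun _ hj => List.rel_of_pairwise_cons hu hj)
    refine (h.supp_add_subset hd).trans (Set.union_subset ?_ ?_)
    · exact (h.supp_smul_subset _ _).trans
        (Set.subset_iUnion₂ (s := fun j (_ : j ∈ i :: l) => Set.range (u j)) i List.mem_cons_self)
    · exact (ih hu.of_cons).trans (Set.iUnion₂_mono' fun j hj => ⟨j, List.mem_cons_of_mem _ hj,
        subset_rfl⟩)

lemma disjSupp_smul_listSum (x : ι → C) {u : ι → Minj ℕ} {i : ι} {l : List ι}
    (hu : DisjointRanges u (i :: l)) : DisjSupp (u i • x i) (h.listSum x u l) :=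
  Disjoint.mono (h.supp_smul_subset _ _) (h.supp_listSum_subset x hu.of_cons)
    (Set.disjoint_iUnion₂_right.2 fun _ hj => List.rel_of_pairwise_cons hu hj)

lemma disjSupp_listSum_append (x : ι → C) {u : ι → Minj ℕ} {l₁ l₂ : List ι}
    (hu : DisjointRanges u (l₁ ++ l₂)) : DisjSupp (h.listSum x u l₁) (h.listSum x u l₂) := by
  obtain ⟨hu₁, hu₂, hcross⟩ := List.pairwise_append.1 hu
  exact Disjoint.mono (h.supp_listSum_subset x hu₁) (h.supp_listSum_subset x hu₂)
    (Set.disjoint_iUnion₂_left.2 fun i hi => Set.disjoint_iUnion₂_right.2 fun j hj =>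
      hcross i hi j hj)

lemma listSum_append (x : ι → C) {u : ι → Minj ℕ} {l₁ l₂ : List ι}
    (hu : DisjointRanges u (l₁ ++ l₂)) :
    h.listSum x u (l₁ ++ l₂) = h.add (h.listSum x u l₁) (h.listSum x u l₂) := by
  induction l₁ with
  | nil => exact (h.zero_add' _).symm
  | cons i l₁ ih =>
    change h.add _ (h.listSum x u (l₁ ++ l₂)) = _
    rw [ih hu.of_cons]
    exact (h.add_assoc' (h.disjSupp_smul_listSum x hu.of_cons_append_left)
      (h.disjSupp_listSum_append x hu.of_cons)
      (h.disjSupp_smul_listSum x hu.of_cons_append_right)).symm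

lemma smul_listSum (x : ι → C) {u : ι → Minj ℕ} {l : List ι} (hu : DisjointRanges u l)
    (w : Minj ℕ) : w • h.listSum x u l = h.listSum x (fun i => w * u i) l := by
  induction l with
  | nil => exact h.smul_zero' w
  | cons i l ih =>
    change w • h.add _ _ = h.add _ _
    rw [h.smul_add w (h.disjSupp_smul_listSum x hu), ih hu.of_cons, mul_smul]

lemma listSum_congr (x : ι → C) {u u' : ι → Minj ℕ} {l : List ι} (e : ∀ i ∈ l, u' i = u i) :
    h.listSum x u' l = h.listSum x u l := by
  induction l with
  | nil => rfl
  | cons i l ih =>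
    change h.add _ _ = h.add _ _
    rw [e i List.mem_cons_self, ih fun j hj => e j (List.mem_cons_of_mem _ hj)]

lemma listSum_perm (x : ι → C) {u : ι → Minj ℕ} {l l' : List ι} (p : l.Perm l')
    (hu : DisjointRanges u l) : h.listSum x u l = h.listSum x u l' := by
  induction p with
  | nil => rfl
  | cons i _ ih => exact congrArg (h.add _) (ih hu.of_cons)
  | swap i j l =>
    exact h.add_left_comm (h.disj_smul hu.disjoint_first_two _ _)
      (h.disjSupp_smul_listSum x hu.of_cons_cons)
      (h.disjSupp_smul_listSum x hu.of_cons)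
  | trans p₁ _ ih₁ ih₂ => exact (ih₁ hu).trans (ih₂ (hu.perm p₁))

/-- The paper's `[v,u]^x = Σ_{i ∈ l} [v i, u i]^{x i}`. -/
def twistSum (x : ι → C) (u v : ι → Minj ℕ) :
    (l : List ι) → DisjointRanges u l → DisjointRanges v l →
      (h.listSum x u l ⟶ h.listSum x v l)
  | [], _, _ => 𝟙 h.zero
  | i :: l, hu, hv => h.addHom (h.disjSupp_smul_listSum x hu) (h.disjSupp_smul_listSum x hv)
      (h.tw (v i) (u i) (x i)) (twistSum x u v l hu.of_cons hv.of_cons)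

def IsTwistSum {s t : C} (f : s ⟶ t) (l : List ι) (x : ι → C) (u v : ι → Minj ℕ) : Prop :=
  ∃ (hu : DisjointRanges u l) (hv : DisjointRanges v l),
    s = h.listSum x u l ∧ t = h.listSum x v l ∧ f ≍ h.twistSum x u v l hu hv

def IsListSum (a : C) (l : List ι) (x : ι → C) (c : ι → Minj ℕ) : Prop :=
  DisjointRanges c l ∧ a = h.listSum x c l

variable (x : ι → C)

lemma twistSum_comp {u v w : ι → Minj ℕ} {l : List ι} (hu : DisjointRanges u l)
    (hv : DisjointRanges v l) (hw : DisjointRanges w l) :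
    h.twistSum x u v l hu hv ≫ h.twistSum x v w l hv hw = h.twistSum x u w l hu hw := by
  induction l with
  | nil => exact Category.id_comp _
  | cons i l ih =>
    have e := (h.addHom_comp (h.disjSupp_smul_listSum x hu) (h.disjSupp_smul_listSum x hv)
      (h.disjSupp_smul_listSum x hw) (h.tw (v i) (u i) (x i)) (h.tw (w i) (v i) (x i))
      (h.twistSum x u v l hu.of_cons hv.of_cons) (h.twistSum x v w l hv.of_cons hw.of_cons)).symm
    rw [h.tw_comp, ih] at e
    exact e

lemma twistSum_self {u : ι → Minj ℕ} {l : List ι} (hu : DisjointRanges u l) :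
    h.twistSum x u u l hu hu = 𝟙 _ := by
  induction l with
  | nil => rfl
  | cons i l ih =>
    simp only [twistSum]
    rw [h.tw_self, ih, h.addHom_id]
    rfl

lemma twistSum_congr_heq {u v u' v' : ι → Minj ℕ} {l : List ι} (hu : DisjointRanges u l)
    (hv : DisjointRanges v l) (hu' : DisjointRanges u' l) (hv' : DisjointRanges v' l)
    (eu : ∀ i ∈ l, u' i = u i) (ev : ∀ i ∈ l, v' i = v i) :
    h.twistSum x u' v' l hu' hv' ≍ h.twistSum x u v l hu hv := by
  induction l with
  | nil => rfl
  | cons i l ih =>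
    have eu' := eu i List.mem_cons_self
    have ev' := ev i List.mem_cons_self
    refine h.addHom_heq_addHom (by rw [eu']) (h.listSum_congr x fun j hj => eu j (.tail _ hj))
      (by rw [ev']) (h.listSum_congr x fun j hj => ev j (.tail _ hj)) (by rw [eu', ev'])
      (ih hu.of_cons hv.of_cons hu'.of_cons hv'.of_cons (fun j hj => eu j (.tail _ hj))
        fun j hj => ev j (.tail _ hj))

lemma twistSum_append_heq {u v : ι → Minj ℕ} {l₁ l₂ : List ι} (hu : DisjointRanges u (l₁ ++ l₂))
    (hv : DisjointRanges v (l₁ ++ l₂)) :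
    h.twistSum x u v (l₁ ++ l₂) hu hv ≍
      h.addHom (h.disjSupp_listSum_append x hu) (h.disjSupp_listSum_append x hv)
        (h.twistSum x u v l₁ (List.pairwise_append.1 hu).1 (List.pairwise_append.1 hv).1)
        (h.twistSum x u v l₂ (List.pairwise_append.1 hu).2.1 (List.pairwise_append.1 hv).2.1) := by
  induction l₁ with
  | nil => exact (h.id_zero_addHom_heq _ _ _).symm
  | cons i l₁ ih =>
    have du₁ := h.disjSupp_smul_listSum x hu.of_cons_append_left
    have du₂ := h.disjSupp_smul_listSum x hu.of_cons_append_right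
    have dv₁ := h.disjSupp_smul_listSum x hv.of_cons_append_left
    have dv₂ := h.disjSupp_smul_listSum x hv.of_cons_append_right
    have du := h.disjSupp_add_right du₁ du₂ (h.disjSupp_listSum_append x hu.of_cons)
    have dv := h.disjSupp_add_right dv₁ dv₂ (h.disjSupp_listSum_append x hv.of_cons)
    exact (h.addHom_heq_addHom (hd₂ := du) (hd₂' := dv) rfl (h.listSum_append x hu.of_cons) rfl
      (h.listSum_append x hv.of_cons) HEq.rfl (ih hu.of_cons hv.of_cons)).trans
      (h.addHom_assoc_heq du₁ (h.disjSupp_listSum_append x hu.of_cons) du₂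
        dv₁ (h.disjSupp_listSum_append x hv.of_cons) dv₂ _ _ du dv _ _ _).symm

lemma act_twistSum_heq (w : Minj ℕ) {u v : ι → Minj ℕ} {l : List ι} (hu : DisjointRanges u l)
    (hv : DisjointRanges v l) :
    h.act w (h.twistSum x u v l hu hv) ≍
      h.twistSum x (fun i => w * u i) (fun i => w * v i) l (hu.mul_left w) (hv.mul_left w) := by
  induction l with
  | nil =>
    change h.act w (𝟙 h.zero) ≍ 𝟙 h.zero
    rw [MCat.act_id, h.smul_zero']
  | cons i l ih =>
    have hwu : DisjSupp (w • u i • x i) (w • h.listSum x u l) := by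
      rw [← mul_smul, h.smul_listSum x hu.of_cons]
      exact h.disjSupp_smul_listSum x (hu.mul_left w)
    have hwv : DisjSupp (w • v i • x i) (w • h.listSum x v l) := by
      rw [← mul_smul, h.smul_listSum x hv.of_cons]
      exact h.disjSupp_smul_listSum x (hv.mul_left w)
    exact (h.act_addHom_heq w _ _ hwu hwv _ _).trans
      (h.addHom_heq_addHom (mul_smul _ _ _).symm (h.smul_listSum x hu.of_cons w)
        (mul_smul _ _ _).symm (h.smul_listSum x hv.of_cons w) (h.act_tw_heq w _ _ _)
        (ih hu.of_cons hv.of_cons))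

lemma twistSum_perm_heq {u v : ι → Minj ℕ} {l l' : List ι} (p : l.Perm l') (hu : DisjointRanges u l)
    (hv : DisjointRanges v l) :
    h.twistSum x u v l hu hv ≍ h.twistSum x u v l' (hu.perm p) (hv.perm p) := by
  induction p with
  | nil => rfl
  | cons i p ih =>
    exact h.addHom_heq_addHom rfl (h.listSum_perm x p hu.of_cons) rfl
      (h.listSum_perm x p hv.of_cons) HEq.rfl (ih hu.of_cons hv.of_cons)
  | swap i j l =>
    exact h.addHom_left_comm_heq (h.disj_smul hu.disjoint_first_two _ _)
      (h.disjSupp_smul_listSum x hu.of_cons_cons) (h.disjSupp_smul_listSum x hu.of_cons)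
      (h.disj_smul hv.disjoint_first_two _ _) (h.disjSupp_smul_listSum x hv.of_cons_cons)
      (h.disjSupp_smul_listSum x hv.of_cons) _ _ _
  | trans p₁ _ ih₁ ih₂ => exact (ih₁ hu hv).trans (ih₂ _ _)

end

section

variable {C : Type*} [Category C] [MulAction (Minj ℕ) C] {h : ParSum C} {ι : Type*}
  {s t r : C} {f : s ⟶ t} {l : List ι} {x : ι → C} {u v : ι → Minj ℕ}

namespace IsTwistSum

lemma eq {f' : s ⟶ t} (hf : h.IsTwistSum f l x u v) (hf' : h.IsTwistSum f' l x u v) : f = f' := by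
  obtain ⟨_, _, _, _, e⟩ := hf
  obtain ⟨_, _, _, _, e'⟩ := hf'
  exact eq_of_heq (e.trans e'.symm)

lemma comp {w : ι → Minj ℕ} {g : t ⟶ r} (hf : h.IsTwistSum f l x u v)
    (hg : h.IsTwistSum g l x v w) : h.IsTwistSum (f ≫ g) l x u w := by
  obtain ⟨hu, hv, hs, ht, ef⟩ := hf
  obtain ⟨_, hw, _, hr, eg⟩ := hg
  exact ⟨hu, hw, hs, hr, (heq_comp hs ht hr ef eg).trans (heq_of_eq (h.twistSum_comp x hu hv hw))⟩

lemma eqToHom_comp (hf : h.IsTwistSum f l x u v) {s' : C} (p : s' = s) :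
    h.IsTwistSum (eqToHom p ≫ f) l x u v := by
  obtain ⟨hu, hv, hs, ht, ef⟩ := hf
  exact ⟨hu, hv, p.trans hs, ht, (eqToHom_comp_heq_iff _ _ _).2 ef⟩

lemma comp_eqToHom (hf : h.IsTwistSum f l x u v) {t' : C} (p : t = t') :
    h.IsTwistSum (f ≫ eqToHom p) l x u v := by
  obtain ⟨hu, hv, hs, ht, ef⟩ := hf
  exact ⟨hu, hv, hs, p.symm.trans ht, (comp_eqToHom_heq_iff _ _ _).2 ef⟩

lemma congr (hf : h.IsTwistSum f l x u v) {u' v' : ι → Minj ℕ} (eu : ∀ i ∈ l, u' i = u i)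
    (ev : ∀ i ∈ l, v' i = v i) : h.IsTwistSum f l x u' v' := by
  obtain ⟨hu, hv, hs, ht, ef⟩ := hf
  exact ⟨hu.congr eu, hv.congr ev, hs.trans (h.listSum_congr x eu).symm,
    ht.trans (h.listSum_congr x ev).symm, ef.trans (h.twistSum_congr_heq x hu hv _ _ eu ev).symm⟩

lemma perm (hf : h.IsTwistSum f l x u v) {l' : List ι} (p : l.Perm l') :
    h.IsTwistSum f l' x u v := by
  obtain ⟨hu, hv, hs, ht, ef⟩ := hf
  exact ⟨hu.perm p, hv.perm p, hs.trans (h.listSum_perm x p hu), ht.trans (h.listSum_perm x p hv),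
    ef.trans (h.twistSum_perm_heq x p hu hv)⟩

lemma add {s' t' : C} {f' : s' ⟶ t'} {l' : List ι} (hf : h.IsTwistSum f l x u v)
    (hf' : h.IsTwistSum f' l' x u v)
    (hu : ∀ i ∈ l, ∀ j ∈ l', Disjoint (Set.range (u i)) (Set.range (u j)))
    (hv : ∀ i ∈ l, ∀ j ∈ l', Disjoint (Set.range (v i)) (Set.range (v j)))
    {hd : DisjSupp s s'} {hd' : DisjSupp t t'} :
    h.IsTwistSum (h.addHom hd hd' f f') (l ++ l') x u v := by
  obtain ⟨hu₁, hv₁, hs, ht, ef⟩ := hf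
  obtain ⟨hu₂, hv₂, hs', ht', ef'⟩ := hf'
  have hU : DisjointRanges u (l ++ l') := List.pairwise_append.2 ⟨hu₁, hu₂, hu⟩
  have hV : DisjointRanges v (l ++ l') := List.pairwise_append.2 ⟨hv₁, hv₂, hv⟩
  refine ⟨hU, hV, by rw [hs, hs', h.listSum_append x hU], by rw [ht, ht', h.listSum_append x hV],
    ?_⟩
  exact (h.addHom_heq_addHom hs hs' ht ht' ef ef').trans (h.twistSum_append_heq x hU hV).symm

lemma act (hf : h.IsTwistSum f l x u v) (w : Minj ℕ) :
    h.IsTwistSum (h.act w f) l x (fun i => w * u i) (fun i => w * v i) := by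
  obtain ⟨hu, hv, hs, ht, ef⟩ := hf
  exact ⟨hu.mul_left w, hv.mul_left w, by rw [hs, h.smul_listSum x hu],
    by rw [ht, h.smul_listSum x hv],
    (h.act_heq_act w hs ht ef).trans (h.act_twistSum_heq x w hu hv)⟩

end IsTwistSum

lemma isTwistSum_id {a : C} {c : ι → Minj ℕ} (ha : h.IsListSum a l x c) :
    h.IsTwistSum (𝟙 a) l x c c := by
  obtain ⟨hc, rfl⟩ := ha
  exact ⟨hc, hc, rfl, rfl, heq_of_eq (h.twistSum_self x hc).symm⟩

lemma isTwistSum_tw {a : C} {c : ι → Minj ℕ} (ha : h.IsListSum a l x c) (v u : Minj ℕ) :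
    h.IsTwistSum (h.tw v u a) l x (fun i => u * c i) (fun i => v * c i) := by
  obtain ⟨hc, rfl⟩ := ha
  induction l with
  | nil => exact ⟨.nil, .nil, h.smul_zero' u, h.smul_zero' v, h.tw_zero_heq v u⟩
  | cons i l ih =>
    obtain ⟨_, _, hs, ht, e⟩ := ih hc.of_cons
    have du : DisjSupp (u • c i • x i) (u • h.listSum x c l) := by
      rw [← mul_smul, hs]
      exact h.disjSupp_smul_listSum x (hc.mul_left u)
    have dv : DisjSupp (v • c i • x i) (v • h.listSum x c l) := by
      rw [← mul_smul, ht]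
      exact h.disjSupp_smul_listSum x (hc.mul_left v)
    refine ⟨hc.mul_left u, hc.mul_left v, ?_, ?_, ?_⟩
    · rw [← h.smul_listSum x hc]
    · rw [← h.smul_listSum x hc]
    · exact (h.tw_add_heq v u (h.disjSupp_smul_listSum x hc) du dv).trans
        (h.addHom_heq_addHom (mul_smul _ _ _).symm hs (mul_smul _ _ _).symm ht
          (h.tw_smul_heq _ _ _ _) e)

lemma isListSum_singleton (x : ι → C) (i : ι) : h.IsListSum (x i) [i] x 1 :=
  ⟨List.pairwise_singleton _ _, by simp [listSum, h.add_zero']⟩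

end

section Monoidal

variable {C : Type*} [Category C] [MulAction (Minj ℕ) C] {h : ParSum C}
  (φ : Fin 2 × ℕ → ℕ) (hφ : Function.Injective φ)

local notation "φ¹" => phiC φ hφ 0
local notation "φ²" => phiC φ hφ 1

section

variable {ι : Type*} {x : ι → C}

lemma IsTwistSum.fhom {a a' b b' : C} {f : a ⟶ a'} {g : b ⟶ b'} {l₁ l₂ : List ι}
    {u₁ v₁ u₂ v₂ U V : ι → Minj ℕ} (hf : h.IsTwistSum f l₁ x u₁ v₁)
    (hg : h.IsTwistSum g l₂ x u₂ v₂) (h₁ : ∀ i ∈ l₁, U i = φ¹ * u₁ i ∧ V i = φ¹ * v₁ i)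
    (h₂ : ∀ i ∈ l₂, U i = φ² * u₂ i ∧ V i = φ² * v₂ i) :
    h.IsTwistSum (Fhom h φ hφ f g) (l₁ ++ l₂) x U V :=
  ((hf.act φ¹).congr (fun i hi => (h₁ i hi).1) fun i hi => (h₁ i hi).2).add
    ((hg.act φ²).congr (fun i hi => (h₂ i hi).1) fun i hi => (h₂ i hi).2)
    (fun i hi j hj => by
      rw [(h₁ i hi).1, (h₂ j hj).1]; exact disjoint_range_mul (disjoint_phiC_ranges φ hφ) _ _)
    (fun i hi j hj => by
      rw [(h₁ i hi).2, (h₂ j hj).2]; exact disjoint_range_mul (disjoint_phiC_ranges φ hφ) _ _)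

lemma isListSum_fobj {a b : C} {la lb : List ι} {ca cb c : ι → Minj ℕ}
    (ha : h.IsListSum a la x ca) (hb : h.IsListSum b lb x cb) (h₁ : ∀ i ∈ la, c i = φ¹ * ca i)
    (h₂ : ∀ i ∈ lb, c i = φ² * cb i) : h.IsListSum (Fobj h φ hφ a b) (la ++ lb) x c := by
  obtain ⟨hc, -, hs, -⟩ := (isTwistSum_id ha).fhom φ hφ (isTwistSum_id hb)
    (fun i hi => ⟨h₁ i hi, h₁ i hi⟩) fun i hi => ⟨h₂ i hi, h₂ i hi⟩
  exact ⟨hc, hs⟩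

lemma isTwistSum_braiding {a b : C} {la lb : List ι} {ca cb U V : ι → Minj ℕ}
    (ha : h.IsListSum a la x ca) (hb : h.IsListSum b lb x cb)
    (h₁ : ∀ i ∈ la, U i = φ¹ * ca i ∧ V i = φ² * ca i)
    (h₂ : ∀ i ∈ lb, U i = φ² * cb i ∧ V i = φ¹ * cb i) :
    h.IsTwistSum (braiding h φ hφ a b) (la ++ lb) x U V :=
  (((isTwistSum_tw ha φ² φ¹).congr (fun i hi => (h₁ i hi).1) fun i hi => (h₁ i hi).2).add
    ((isTwistSum_tw hb φ¹ φ²).congr (fun i hi => (h₂ i hi).1) fun i hi => (h₂ i hi).2)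
    (fun i hi j hj => by
      rw [(h₁ i hi).1, (h₂ j hj).1]; exact disjoint_range_mul (disjoint_phiC_ranges φ hφ) _ _)
    (fun i hi j hj => by
      rw [(h₁ i hi).2, (h₂ j hj).2]
      exact disjoint_range_mul (disjoint_phiC_ranges φ hφ).symm _ _)).comp_eqToHom _

lemma isTwistSum_parAssociator {a b c : C} {la lb lc : List ι} {ca cb cc U V : ι → Minj ℕ}
    (ha : h.IsListSum a la x ca) (hb : h.IsListSum b lb x cb) (hc : h.IsListSum c lc x cc)
    (h₁ : ∀ i ∈ la, U i = φ¹ * φ¹ * ca i ∧ V i = φ¹ * ca i)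
    (h₂ : ∀ i ∈ lb, U i = φ¹ * φ² * cb i ∧ V i = φ² * φ¹ * cb i)
    (h₃ : ∀ i ∈ lc, U i = φ² * cc i ∧ V i = φ² * φ² * cc i) :
    h.IsTwistSum (parAssociator h φ hφ a b c) (la ++ lb ++ lc) x U V := by
  have d := disjoint_phiC_ranges φ hφ
  have ta := (isTwistSum_tw ha φ¹ (φ¹ * φ¹)).congr (fun i hi => (h₁ i hi).1)
    (fun i hi => (h₁ i hi).2)
  have tb := (isTwistSum_tw hb (φ² * φ¹) (φ¹ * φ²)).congr (fun i hi => (h₂ i hi).1)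
    (fun i hi => (h₂ i hi).2)
  have tc := (isTwistSum_tw hc (φ² * φ²) φ²).congr (fun i hi => (h₃ i hi).1)
    (fun i hi => (h₃ i hi).2)
  refine (((ta.add tb ?_ ?_).add tc ?_ ?_).comp_eqToHom _).eqToHom_comp _
  · intro i hi j hj
    rw [(h₁ i hi).1, (h₂ j hj).1]
    exact disjoint_range_mul (range_mul_disjoint _ d) _ _
  · intro i hi j hj
    rw [(h₁ i hi).2, (h₂ j hj).2]
    exact Disjoint.mono (range_mul_subset _ _) (range_mul_mul_subset _ _ _) d
  · intro i hi j hj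
    rw [(h₃ j hj).1]
    rcases List.mem_append.1 hi with hi | hi
    · rw [(h₁ i hi).1]
      exact Disjoint.mono (range_mul_mul_subset _ _ _) (range_mul_subset _ _) d
    · rw [(h₂ i hi).1]
      exact Disjoint.mono (range_mul_mul_subset _ _ _) (range_mul_subset _ _) d
  · intro i hi j hj
    rw [(h₃ j hj).2]
    rcases List.mem_append.1 hi with hi | hi
    · rw [(h₁ i hi).2]
      exact Disjoint.mono (range_mul_subset _ _) (range_mul_mul_subset _ _ _) d
    · rw [(h₂ i hi).2]
      exact disjoint_range_mul (range_mul_disjoint _ d) _ _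

lemma isTwistSum_rightUnitor {a : C} {l : List ι} {c : ι → Minj ℕ} (ha : h.IsListSum a l x c) :
    h.IsTwistSum (rightUnitor h φ hφ a) l x c (fun i => φ¹ * c i) :=
  (((isTwistSum_tw ha φ¹ 1).congr (fun i _ => (one_mul (c i)).symm) fun _ _ => rfl).comp_eqToHom
    _).eqToHom_comp _

lemma isTwistSum_leftUnitor {a : C} {l : List ι} {c : ι → Minj ℕ} (ha : h.IsListSum a l x c) :
    h.IsTwistSum (leftUnitor h φ hφ a) l x c (fun i => φ² * c i) :=
  (((isTwistSum_tw ha φ² 1).congr (fun i _ => (one_mul (c i)).symm) fun _ _ => rfl).comp_eqToHom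
    _).eqToHom_comp _

end

variable (h)

theorem pentagon (w x y z : C) :
    Fhom h φ hφ (parAssociator h φ hφ w x y) (𝟙 z) ≫
        parAssociator h φ hφ w (Fobj h φ hφ x y) z ≫
        Fhom h φ hφ (𝟙 w) (parAssociator h φ hφ x y z) =
      parAssociator h φ hφ (Fobj h φ hφ w x) y z ≫
        parAssociator h φ hφ w x (Fobj h φ hφ y z) := by
  let X : Fin 4 → C := ![w, x, y, z]
  -- Entry `i` of an index vector is the injection through which `X i` enters the object;
  -- entries outside the list at hand are never read.
  have P : ∀ i, h.IsListSum (X i) [i] X 1 := isListSum_singleton X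
  have Pwx : h.IsListSum (Fobj h φ hφ w x) [0, 1] X ![φ¹, φ², 1, 1] :=
    isListSum_fobj φ hφ (P 0) (P 1) (by simp) (by simp)
  have Pxy : h.IsListSum (Fobj h φ hφ x y) [1, 2] X ![1, φ¹, φ², 1] :=
    isListSum_fobj φ hφ (P 1) (P 2) (by simp) (by simp)
  have Pyz : h.IsListSum (Fobj h φ hφ y z) [2, 3] X ![1, 1, φ¹, φ²] :=
    isListSum_fobj φ hφ (P 2) (P 3) (by simp) (by simp)
  have α₁ := isTwistSum_parAssociator φ hφ (P 0) (P 1) (P 2)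
    (U := ![φ¹ * φ¹, φ¹ * φ², φ², 1]) (V := ![φ¹, φ² * φ¹, φ² * φ², 1])
    (by simp) (by simp) (by simp)
  have α₂ := isTwistSum_parAssociator φ hφ (P 0) Pxy (P 3)
    (U := ![φ¹ * φ¹, φ¹ * (φ² * φ¹), φ¹ * (φ² * φ²), φ²])
    (V := ![φ¹, φ² * (φ¹ * φ¹), φ² * (φ¹ * φ²), φ² * φ²])
    (by simp) (by simp [mul_assoc]) (by simp)
  have α₃ := isTwistSum_parAssociator φ hφ (P 1) (P 2) (P 3)
    (U := ![1, φ¹ * φ¹, φ¹ * φ², φ²]) (V := ![1, φ¹, φ² * φ¹, φ² * φ²])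
    (by simp) (by simp) (by simp)
  have α₄ := isTwistSum_parAssociator φ hφ Pwx (P 2) (P 3)
    (U := ![φ¹ * (φ¹ * φ¹), φ¹ * (φ¹ * φ²), φ¹ * φ², φ²])
    (V := ![φ¹ * φ¹, φ¹ * φ², φ² * φ¹, φ² * φ²])
    (by simp [mul_assoc]) (by simp) (by simp)
  have α₅ := isTwistSum_parAssociator φ hφ (P 0) (P 1) Pyz
    (U := ![φ¹ * φ¹, φ¹ * φ², φ² * φ¹, φ² * φ²])
    (V := ![φ¹, φ² * φ¹, φ² * (φ² * φ¹), φ² * (φ² * φ²)])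
    (by simp) (by simp) (by simp [mul_assoc])
  refine IsTwistSum.eq ((α₁.fhom φ hφ (isTwistSum_id (P 3)) ?_ ?_).comp
    (α₂.comp ((isTwistSum_id (P 0)).fhom φ hφ α₃ ?_ ?_))) (α₄.comp α₅)
  all_goals simp

theorem triangle (x y : C) :
    Fhom h φ hφ (rightUnitor h φ hφ x) (𝟙 y) ≫ parAssociator h φ hφ x h.zero y =
      Fhom h φ hφ (𝟙 x) (leftUnitor h φ hφ y) := by
  let X : Fin 2 → C := ![x, y]
  have P : ∀ i, h.IsListSum (X i) [i] X 1 := isListSum_singleton X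
  have P₀ : h.IsListSum h.zero [] X 1 := ⟨.nil, rfl⟩
  refine IsTwistSum.eq (l := [0, 1]) (x := X) (u := ![φ¹, φ²]) (v := ![φ¹, φ² * φ²])
    (((isTwistSum_rightUnitor φ hφ (P 0)).fhom φ hφ (isTwistSum_id (P 1)) ?_ ?_).comp
      (isTwistSum_parAssociator φ hφ (P 0) P₀ (P 1) (U := ![φ¹ * φ¹, φ²]) ?_ ?_ ?_))
    ((isTwistSum_id (P 0)).fhom φ hφ (isTwistSum_leftUnitor φ hφ (P 1)) ?_ ?_)
  all_goals simp

theorem hexagon (x y z : C) :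
    parAssociator h φ hφ x y z ≫ braiding h φ hφ x (Fobj h φ hφ y z) ≫
        parAssociator h φ hφ y z x =
      Fhom h φ hφ (braiding h φ hφ x y) (𝟙 z) ≫ parAssociator h φ hφ y x z ≫
        Fhom h φ hφ (𝟙 y) (braiding h φ hφ x z) := by
  let X : Fin 3 → C := ![x, y, z]
  have P : ∀ i, h.IsListSum (X i) [i] X 1 := isListSum_singleton X
  have Pyz : h.IsListSum (Fobj h φ hφ y z) [1, 2] X ![1, φ¹, φ²] :=
    isListSum_fobj φ hφ (P 1) (P 2) (by simp) (by simp)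
  have α₁ := isTwistSum_parAssociator φ hφ (P 0) (P 1) (P 2)
    (U := ![φ¹ * φ¹, φ¹ * φ², φ²]) (V := ![φ¹, φ² * φ¹, φ² * φ²]) (by simp) (by simp) (by simp)
  have τ₁ := isTwistSum_braiding φ hφ (P 0) Pyz
    (U := ![φ¹, φ² * φ¹, φ² * φ²]) (V := ![φ², φ¹ * φ¹, φ¹ * φ²]) (by simp) (by simp)
  have α₂ := isTwistSum_parAssociator φ hφ (P 1) (P 2) (P 0)
    (U := ![φ², φ¹ * φ¹, φ¹ * φ²]) (V := ![φ² * φ², φ¹, φ² * φ¹]) (by simp) (by simp) (by simp)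
  have τ₂ := isTwistSum_braiding φ hφ (P 0) (P 1)
    (U := ![φ¹, φ², 1]) (V := ![φ², φ¹, 1]) (by simp) (by simp)
  have α₃ := isTwistSum_parAssociator φ hφ (P 1) (P 0) (P 2)
    (U := ![φ¹ * φ², φ¹ * φ¹, φ²]) (V := ![φ² * φ¹, φ¹, φ² * φ²]) (by simp) (by simp) (by simp)
  have τ₃ := isTwistSum_braiding φ hφ (P 0) (P 2)
    (U := ![φ¹, 1, φ²]) (V := ![φ², 1, φ¹]) (by simp) (by simp)
  refine IsTwistSum.eq (l := [0, 1, 2]) (α₁.comp (τ₁.comp (α₂.perm (by decide))))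
    ((τ₂.fhom φ hφ (isTwistSum_id (P 2)) ?_ ?_).comp
      ((α₃.perm (by decide)).comp (((isTwistSum_id (P 1)).fhom φ hφ τ₃ ?_ ?_).perm (by decide))))
  all_goals simp

theorem braiding_braiding (x y : C) :
    braiding h φ hφ x y ≫ braiding h φ hφ y x = 𝟙 (Fobj h φ hφ x y) := by
  let X : Fin 2 → C := ![x, y]
  have P : ∀ i, h.IsListSum (X i) [i] X 1 := isListSum_singleton X
  have Pxy : h.IsListSum (Fobj h φ hφ x y) [0, 1] X ![φ¹, φ²] :=
    isListSum_fobj φ hφ (P 0) (P 1) (by simp) (by simp)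
  exact IsTwistSum.eq
    ((isTwistSum_braiding φ hφ (P 0) (P 1) (U := ![φ¹, φ²]) (V := ![φ², φ¹]) (by simp)
      (by simp)).comp
      ((isTwistSum_braiding φ hφ (P 1) (P 0) (by simp) (by simp)).perm (by decide)))
    (isTwistSum_id Pxy)

end Monoidal

end ParSum

/-- For a parsummable category `C` and an injection `φ : {1,2} × ℕ → ℕ`, the functor `φ_*`
together with the unit object `0`, the associativity isomorphisms `α`, the symmetry
isomorphisms `τ` and the unit isomorphisms makes the underlying category of `C` a symmetric
monoidal category: the pentagon axiom, the unit (triangle) axiom and the hexagon axiom hold,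
and `τ_{y,x} ∘ τ_{x,y} = id`. -/
theorem stmt2 (C : Type*) [Category C] [MulAction (Minj ℕ) C] (h : ParSum C)
    (φ : Fin 2 × ℕ → ℕ) (hφ : Function.Injective φ) :
    -- pentagon coherence
    (∀ w x y z : C,
      Fhom h φ hφ (parAssociator h φ hφ w x y) (𝟙 z) ≫
          parAssociator h φ hφ w (Fobj h φ hφ x y) z ≫
          Fhom h φ hφ (𝟙 w) (parAssociator h φ hφ x y z) =
        parAssociator h φ hφ (Fobj h φ hφ w x) y z ≫ parAssociator h φ hφ w x (Fobj h φ hφ y z)) ∧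
    -- unit coherence (triangle)
    (∀ x y : C,
      Fhom h φ hφ (rightUnitor h φ hφ x) (𝟙 y) ≫ parAssociator h φ hφ x h.zero y =
        Fhom h φ hφ (𝟙 x) (leftUnitor h φ hφ y)) ∧
    -- hexagon relating associativity and symmetry
    (∀ x y z : C,
      parAssociator h φ hφ x y z ≫ braiding h φ hφ x (Fobj h φ hφ y z) ≫
          parAssociator h φ hφ y z x =
        Fhom h φ hφ (braiding h φ hφ x y) (𝟙 z) ≫ parAssociator h φ hφ y x z ≫
          Fhom h φ hφ (𝟙 y) (braiding h φ hφ x z)) ∧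
    -- the symmetry is an involution
    (∀ x y : C, braiding h φ hφ x y ≫ braiding h φ hφ y x = 𝟙 (Fobj h φ hφ x y)) :=
  ⟨h.pentagon φ hφ, h.triangle φ hφ, h.hexagon φ hφ, h.braiding_braiding φ hφ⟩
end
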